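/- arXiv:1907.01083 — 5 statements merged into one kernel-verified Lean document; each statement's English description precedes it below -/
import Mathlib

section
/- Let G be a graph, W and Y disjoint independent sets with |W| = k and |Y| = k+1, such that W ∪ Y induces a forest T, every vertex of W has a neighbor in Y, and every vertex of W has degree at least 2 in T. Then T is a tree (i.e., W ∪ Y induces a connected forest) and every vertex of W has degree exactly 2 in T. -/
open SimpleGraph

variable {V : Type*}

/-- A set of vertices is independent if its vertices are pairwise non-adjacent. -/
def IsIndepSet (G : SimpleGraph V) (s : Set V) : Prop :=
  s.Pairwise fun a b => ¬ G.Adj a b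

/-- `G` contains an induced cycle on `n` vertices. -/
def HasInducedCycle (G : SimpleGraph V) (n : ℕ) : Prop :=
  ∃ f : Fin n ↪ V, ∀ i j, G.Adj (f i) (f j) ↔ (SimpleGraph.cycleGraph n).Adj i j

/-- `G` is even-hole-free: it has no induced cycle of even length at least 4. -/
def EvenHoleFree (G : SimpleGraph V) : Prop :=
  ∀ n, 4 ≤ n → Even n → ¬ HasInducedCycle G n

/-- `G` is C4-free: no induced cycle on 4 vertices. -/
def C4Free (G : SimpleGraph V) : Prop := ¬ HasInducedCycle G 4

/-!
`T` has `2k + 1` vertices, and since `W` and `Y` are independent each edge of `T` joins `W` to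
`Y`, so counting from `W` gives at least `2k` edges. A forest on `2k + 1` vertices has at most
`2k` edges, with equality exactly for a tree; hence `T` is a tree and no vertex of `W` can have
more than two neighbours.
-/

open Finset

namespace SimpleGraph

variable {G : SimpleGraph V}

lemma IsAcyclic.exists_isTree_ge [Nonempty V] (hG : G.IsAcyclic) : ∃ F, G ≤ F ∧ F.IsTree := by
  obtain ⟨F, hGF, -, hF⟩ := connected_top.exists_isTree_le_of_le_of_isAcyclic le_top hG
  exact ⟨F, hGF, hF⟩

variable [Fintype V] [DecidableRel G.Adj]

lemma IsAcyclic.card_edgeFinset_add_one_le [Nonempty V] (hG : G.IsAcyclic) :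
    #G.edgeFinset + 1 ≤ Fintype.card V := by
  classical
  obtain ⟨F, hGF, hF⟩ := hG.exists_isTree_ge
  rw [← hF.card_edgeFinset]
  gcongr

lemma IsAcyclic.isTree_of_card_edgeFinset_add_one (hG : G.IsAcyclic)
    (hcard : #G.edgeFinset + 1 = Fintype.card V) : G.IsTree := by
  classical
  have : Nonempty V := Fintype.card_pos_iff.mp (by omega)
  obtain ⟨F, hGF, hF⟩ := hG.exists_isTree_ge
  have hsub : G.edgeFinset ⊆ F.edgeFinset := edgeFinset_subset_edgeFinset.mpr hGF
  have hGF_eq : G = F := edgeFinset_inj.mp <| eq_of_subset_of_card_le hsub <| by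
    have := hF.card_edgeFinset
    omega
  exact hGF_eq ▸ hF

end SimpleGraph

section BipartiteUnion

variable [DecidableEq V] {G : SimpleGraph V} {W Y : Finset V}

lemma isBipartiteWith_induce_union (hdisj : Disjoint W Y)
    (hW : _root_.IsIndepSet G ↑W) (hY : _root_.IsIndepSet G ↑Y) :
    (G.induce ↑(W ∪ Y)).IsBipartiteWith
      ↑(W.subtype (· ∈ (↑(W ∪ Y) : Set V))) ↑(Y.subtype (· ∈ (↑(W ∪ Y) : Set V))) where
  disjoint := by
    rw [Finset.disjoint_coe, Finset.disjoint_left]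
    intro v hvW hvY
    rw [mem_subtype] at hvW hvY
    exact disjoint_left.mp hdisj hvW hvY
  mem_of_adj := by
    rintro ⟨a, ha⟩ ⟨b, hb⟩ hab
    simp only [comap_adj, Function.Embedding.subtype_apply] at hab
    simp only [coe_union, Set.mem_union, mem_coe] at ha hb
    simp only [mem_coe, mem_subtype]
    have hab' := hab.ne
    rcases ha with ha | ha <;> rcases hb with hb | hb
    · exact absurd hab (hW ha hb hab')
    · exact .inl ⟨ha, hb⟩
    · exact .inr ⟨ha, hb⟩
    · exact absurd hab (hY ha hb hab')

variable [DecidableRel G.Adj]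

lemma degree_induce_union_of_mem_left (hdisj : Disjoint W Y)
    (hW : _root_.IsIndepSet G ↑W) (hY : _root_.IsIndepSet G ↑Y) {v : ↥(↑(W ∪ Y) : Set V)}
    (hv : ↑v ∈ W) : (G.induce ↑(W ∪ Y)).degree v = #{y ∈ Y | G.Adj v y} := by
  rw [← card_neighborFinset_eq_degree, isBipartiteWith_neighborFinset
    (isBipartiteWith_induce_union hdisj hW hY) (by simpa using hv),
    ← card_map (Function.Embedding.subtype _)]
  congr 1
  ext y
  simp only [mem_map, mem_filter, mem_subtype, comap_adj, Function.Embedding.subtype_apply]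
  constructor
  · rintro ⟨y, ⟨hy, hadj⟩, rfl⟩
    exact ⟨hy, hadj⟩
  · rintro ⟨hy, hadj⟩
    exact ⟨⟨y, by simp [hy]⟩, ⟨hy, hadj⟩, rfl⟩

lemma card_edgeFinset_induce_union (hdisj : Disjoint W Y)
    (hW : _root_.IsIndepSet G ↑W) (hY : _root_.IsIndepSet G ↑Y) :
    #(G.induce ↑(W ∪ Y)).edgeFinset = ∑ w ∈ W, #{y ∈ Y | G.Adj w y} := by
  rw [← isBipartiteWith_sum_degrees_eq_card_edges (isBipartiteWith_induce_union hdisj hW hY),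
    ← sum_subtype_of_mem (fun w => #{y ∈ Y | G.Adj w y}) (p := (· ∈ (↑(W ∪ Y) : Set V)))
    fun w hw => by simp [hw]]
  exact sum_congr rfl fun v hv => degree_induce_union_of_mem_left hdisj hW hY (mem_subtype.mp hv)

end BipartiteUnion

theorem forest_tree_deg_two_general [DecidableEq V]
    (G : SimpleGraph V) [DecidableRel G.Adj] (k : ℕ) (W Y : Finset V)
    (hdisj : Disjoint W Y)
    (hW : _root_.IsIndepSet G ↑W) (hY : _root_.IsIndepSet G ↑Y)
    (hcW : W.card = k) (hcY : Y.card = k + 1)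
    (hforest : (G.induce ↑(W ∪ Y)).IsAcyclic)
    (hdeg : ∀ w ∈ W, 2 ≤ (Y.filter fun y => G.Adj w y).card) :
    (G.induce ↑(W ∪ Y)).Connected ∧
      ∀ w ∈ W, (Y.filter fun y => G.Adj w y).card = 2 := by
  have hcard : Fintype.card ↥(↑(W ∪ Y) : Set V) = 2 * k + 1 := by
    rw [← Set.toFinset_card, toFinset_coe, card_union_of_disjoint hdisj, hcW, hcY]
    ring
  obtain ⟨y, hy⟩ := card_pos.mp (by omega : 0 < #Y)
  have : Nonempty ↥(↑(W ∪ Y) : Set V) := ⟨⟨y, by simp [hy]⟩⟩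
  have hedges := card_edgeFinset_induce_union hdisj hW hY
  have htwo : ∑ _w ∈ W, 2 = 2 * k := by rw [sum_const, hcW, smul_eq_mul, mul_comm]
  have hsum : ∑ _w ∈ W, 2 = ∑ w ∈ W, #{y ∈ Y | G.Adj w y} := by
    refine le_antisymm (sum_le_sum hdeg) ?_
    have := hforest.card_edgeFinset_add_one_le
    omega
  refine ⟨(hforest.isTree_of_card_edgeFinset_add_one (by omega)).connected, fun w hw => ?_⟩
  exact ((sum_eq_sum_iff_of_le hdeg).mp hsum w hw).symm

/-- If `W` and `Y` are disjoint independent sets of sizes `k` and `k+1` such that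
`W ∪ Y` induces a forest `T`, every vertex of `W` has a neighbor in `Y`, and every vertex
of `W` has degree at least two in `T`, then `T` is a tree and every vertex of `W` has
degree exactly two in `T`. -/
theorem forest_tree_deg_two [Fintype V] [DecidableEq V]
    (G : SimpleGraph V) [DecidableRel G.Adj] (k : ℕ) (W Y : Finset V)
    (hdisj : Disjoint W Y)
    (hW : _root_.IsIndepSet G ↑W) (hY : _root_.IsIndepSet G ↑Y)
    (hcW : W.card = k) (hcY : Y.card = k + 1)
    (hforest : (G.induce ↑(W ∪ Y)).IsAcyclic)
    (hnbr : ∀ w ∈ W, ∃ y ∈ Y, G.Adj w y)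
    (hdeg : ∀ w ∈ W, 2 ≤ (Y.filter fun y => G.Adj w y).card) :
    (G.induce ↑(W ∪ Y)).Connected ∧
      ∀ w ∈ W, (Y.filter fun y => G.Adj w y).card = 2 :=
  forest_tree_deg_two_general G k W Y hdisj hW hY hcW hcY hforest hdeg
end

section
/- In a bi-tree with no directed obstruction and no alternating obstruction, if (V,A) contains a vertex v of in-degree at least 2, chosen closest to the root, and A_1, …, A_m (m ≥ 2) are the in-components of (V,A)∖v, then there is no white edge with one end in A_i and one end in A_j for i ≠ j. -/
open SimpleGraph

variable {U : Type*}

/-- The red arc relation of the in-arborescence given by `parent` and `root`: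
there is an arc from `a` to `b` iff `a` is not the root and `parent a = b`. -/
def RedArc (parent : U → U) (root a b : U) : Prop := a ≠ root ∧ parent a = b

/-- The set of vertices of the directed red path starting at `a` of length `s`. -/
def redSupport (parent : U → U) (a : U) (s : ℕ) : Set U :=
  {x | ∃ i ≤ s, parent^[i] a = x}

/-- There is a directed red path from `a` to `v` of length `s` (not meeting `v` earlier). -/
def IsRedPath (parent : U → U) (a v : U) (s : ℕ) : Prop :=
  parent^[s] a = v ∧ ∀ i < s, parent^[i] a ≠ v

/-- An obstruction directed to `v`: distinct `a`, `b`, `v`, a white path from `a` to `b` of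
length one or two, and directed red paths from `a` to `v` and from `b` to `v` of length at
least one, the three paths internally vertex-disjoint. -/
def DirObstruction (white : SimpleGraph U) (parent : U → U) (v : U) : Prop :=
  ∃ (a b : U) (r s : ℕ), a ≠ b ∧ a ≠ v ∧ b ≠ v ∧ 1 ≤ r ∧ 1 ≤ s ∧
    IsRedPath parent a v r ∧ IsRedPath parent b v s ∧
    redSupport parent a r ∩ redSupport parent b s ⊆ {a, b, v} ∧
    (white.Adj a b ∨
      ∃ c : U, c ≠ a ∧ c ≠ b ∧ c ≠ v ∧ white.Adj a c ∧ white.Adj c b ∧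
        c ∉ redSupport parent a r ∧ c ∉ redSupport parent b s)

/-- An alternating obstruction: distinct `a`, `b`, `c`, `d`, a white path from `a` to `b`,
a red path between `b` and `c` (directed either way), a white path from `c` to `d`, and a
red path between `d` and `a` (directed either way), internally vertex-disjoint, and at least
one of the two white paths has length exactly one. -/
def AltObstruction (white : SimpleGraph U) (parent : U → U) : Prop :=
  ∃ (a b c d : U), a ≠ b ∧ a ≠ c ∧ a ≠ d ∧ b ≠ c ∧ b ≠ d ∧ c ≠ d ∧
  ∃ (p1 : white.Walk a b) (p2 : white.Walk c d) (e f : U) (s u : ℕ),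
    p1.IsPath ∧ p2.IsPath ∧ 1 ≤ p1.length ∧ 1 ≤ p2.length ∧
    (p1.length = 1 ∨ p2.length = 1) ∧ 1 ≤ s ∧ 1 ≤ u ∧
    ((e = b ∧ IsRedPath parent b c s) ∨ (e = c ∧ IsRedPath parent c b s)) ∧
    ((f = d ∧ IsRedPath parent d a u) ∨ (f = a ∧ IsRedPath parent a d u)) ∧
    ({x | x ∈ p1.support} ∩ {x | x ∈ p2.support} ⊆ {a, b, c, d}) ∧
    ({x | x ∈ p1.support} ∩ redSupport parent e s ⊆ {a, b, c, d}) ∧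
    ({x | x ∈ p1.support} ∩ redSupport parent f u ⊆ {a, b, c, d}) ∧
    ({x | x ∈ p2.support} ∩ redSupport parent e s ⊆ {a, b, c, d}) ∧
    ({x | x ∈ p2.support} ∩ redSupport parent f u ⊆ {a, b, c, d}) ∧
    (redSupport parent e s ∩ redSupport parent f u ⊆ {a, b, c, d})

/-- A separation `(v, X, Y)` of the bi-tree induced on `S` with red root `r`:
`S` is partitioned into `{v}`, `X`, `Y` with `X`, `Y` nonempty, and no white edge
and no red arc has an end in `X` and an end in `Y`. -/
def IsSeparationOn (white : SimpleGraph U) (parent : U → U) (root : U)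
    (S : Set U) (v : U) (X Y : Set U) : Prop :=
  v ∈ S ∧ X ⊆ S ∧ Y ⊆ S ∧ X.Nonempty ∧ Y.Nonempty ∧
  v ∉ X ∧ v ∉ Y ∧ Disjoint X Y ∧ (∀ u ∈ S, u = v ∨ u ∈ X ∨ u ∈ Y) ∧
  (∀ x ∈ X, ∀ y ∈ Y, ¬ white.Adj x y) ∧
  (∀ x ∈ X, ∀ y ∈ Y, ¬ RedArc parent root x y ∧ ¬ RedArc parent root y x)

/-- The bi-tree induced on `S` with red root `r` is a bi-path: the red arcs on `S` form a
directed path `v 0 → v 1 → ⋯ → v (n-1) = r`, the white edge `v 0 — v (n-1)` is present,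
and there is `1 ≤ t ≤ n-1` such that `v 0` is white-adjacent to `v 1, …, v (t-1)` and
`v (n-1)` is white-adjacent to `v t, …, v (n-2)`. -/
def IsBiPathOn (white : SimpleGraph U) (parent : U → U) (S : Set U) (r : U) : Prop :=
  ∃ (n : ℕ) (v : ℕ → U), 2 ≤ n ∧
    (∀ i < n, v i ∈ S) ∧ (∀ x ∈ S, ∃ i < n, v i = x) ∧
    (∀ i j, i < n → j < n → v i = v j → i = j) ∧
    (∀ i, i + 1 < n → parent (v i) = v (i + 1)) ∧
    v (n - 1) = r ∧ white.Adj (v 0) (v (n - 1)) ∧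
    ∃ t, 1 ≤ t ∧ t ≤ n - 1 ∧
      (∀ i, 2 ≤ i → i ≤ t → white.Adj (v 0) (v (i - 1))) ∧
      (∀ i, t + 1 ≤ i → i ≤ n - 1 → white.Adj (v (i - 1)) (v (n - 1)))

/-- The bi-tree induced on `S` rooted at `r` is a bi-spider: it is a bi-path, or its only
separation vertex is the root `r`. -/
def IsBiSpiderOn (white : SimpleGraph U) (parent : U → U) (S : Set U) (r : U) : Prop :=
  IsBiPathOn white parent S r ∨
    ∀ v X Y, IsSeparationOn white parent r S v X Y → v = r

/-- `v` is a leaf (source) of the red in-arborescence induced on `S`. -/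
def redLeafOn (parent : U → U) (root : U) (S : Set U) (v : U) : Prop :=
  ∀ u ∈ S, ¬ RedArc parent root u v

/-- `v` is a leaf of the white tree induced on `S` (exactly one white neighbor in `S`). -/
def whiteLeafOn (white : SimpleGraph U) (S : Set U) (v : U) : Prop :=
  ∃! u, u ∈ S ∧ white.Adj v u

/-- The in-component of the in-neighbor `u` of `v`: vertices whose red path reaches `u`
without passing through `v`. -/
def inComp (parent : U → U) (v u : U) : Set U :=
  {x | ∃ n, parent^[n] x = u ∧ ∀ i ≤ n, parent^[i] x ≠ v}

/-- The red distance from `x` to the root. -/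
noncomputable def rdist (parent : U → U) (root x : U) : ℕ :=
  sInf {n | parent^[n] x = root}

/-- In a bi-tree with no directed obstruction and no alternating obstruction, if `v` has
red in-degree at least two and is chosen closest to the root, then no white edge joins two
distinct in-components of `v`. -/
theorem no_white_edge_between_inComps [Fintype U]
    (white : SimpleGraph U) (parent : U → U) (root : U)
    (hwhite : white.IsTree) (hrootFix : parent root = root)
    (hreach : ∀ x, ∃ n, parent^[n] x = root)
    (hdir : ∀ w, ¬ DirObstruction white parent w)
    (halt : ¬ AltObstruction white parent)
    (v u₁ u₂ : U) (hu : u₁ ≠ u₂)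
    (harc₁ : RedArc parent root u₁ v) (harc₂ : RedArc parent root u₂ v)
    (hclosest : ∀ w, (∃ z₁ z₂, z₁ ≠ z₂ ∧ RedArc parent root z₁ w ∧ RedArc parent root z₂ w) →
      rdist parent root v ≤ rdist parent root w) :
    ∀ x ∈ inComp parent v u₁, ∀ y ∈ inComp parent v u₂, ¬ white.Adj x y := by
  rintro x ⟨n, hxn, hxne⟩ y ⟨m, hym, hyne⟩ hadj
  apply hdir v
  have hxv : parent^[n+1] x = v := by
    rw [Function.iterate_succ_apply', hxn, harc₁.2]
  have hyv : parent^[m+1] y = v := by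
    rw [Function.iterate_succ_apply', hym, harc₂.2]
  refine ⟨x, y, n+1, m+1, hadj.ne, ?_, ?_, Nat.le_add_left 1 n, Nat.le_add_left 1 m,
    ⟨hxv, fun i hi => hxne i (Nat.lt_succ_iff.mp hi)⟩,
    ⟨hyv, fun i hi => hyne i (Nat.lt_succ_iff.mp hi)⟩, ?_, Or.inl hadj⟩
  · simpa using hxne 0 (Nat.zero_le _)
  · simpa using hyne 0 (Nat.zero_le _)
  rintro w ⟨⟨i, hi, hiw⟩, ⟨j, hj, hjw⟩⟩
  simp only [Set.mem_insert_iff, Set.mem_singleton_iff]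
  right; right
  by_contra hwv
  have hwx : parent^[(n+1)-i] w = v := by
    rw [← hiw, ← Function.iterate_add_apply, Nat.sub_add_cancel hi, hxv]
  have hwy : parent^[(m+1)-j] w = v := by
    rw [← hjw, ← Function.iterate_add_apply, Nat.sub_add_cancel hj, hyv]
  have hminx : ∀ k, parent^[k] w = v → n + 1 ≤ i + k := by
    intro k hk
    by_contra h
    exact hxne (k+i) (by omega) (by rw [Function.iterate_add_apply, hiw, hk])
  have hminy : ∀ k, parent^[k] w = v → m + 1 ≤ j + k := by
    intro k hk
    by_contra h
    exact hyne (k+j) (by omega) (by rw [Function.iterate_add_apply, hjw, hk])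
  have ha := hminx _ hwy
  have hb := hminy _ hwx
  have h1 : (n+1) - i = (m+1) - j := by omega
  have ht : 1 ≤ (n+1) - i := by
    rcases Nat.eq_zero_or_pos ((n+1)-i) with h | h
    · rw [h] at hwx; simp at hwx; exact absurd hwx hwv
    · exact h
  have hu1 : parent^[(n+1)-i-1] w = u₁ := by
    have h2 : parent^[((n+1)-i-1) + i] x = parent^[n] x := by congr 1; omega
    rw [Function.iterate_add_apply, hiw] at h2
    rw [h2, hxn]
  have hu2 : parent^[(m+1)-j-1] w = u₂ := by
    have h2 : parent^[((m+1)-j-1) + j] y = parent^[m] y := by congr 1; omega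
    rw [Function.iterate_add_apply, hjw] at h2
    rw [h2, hym]
  exact hu (by rw [← hu1, ← hu2, h1])
end

section
/- A bi-tree T = (V, A, E) on at least two vertices with no directed obstruction and no alternating obstruction is either a bi-spider, or admits a separation (v, X, Y) such that T∖Y is a bi-spider and v is either a leaf of the red in-arborescence induced by T∖X or a leaf of the white tree induced by T∖X. -/
open SimpleGraph

variable {U : Type*}

lemma fix_eq_root {parent : U → U} {root v : U} (hreach : ∀ x, ∃ n, parent^[n] x = root)
    (hv : parent v = v) : v = root := by
  obtain ⟨n, hn⟩ := hreach v
  rw [Function.iterate_fixed hv] at hn; exact hn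

lemma two_cycle {parent : U → U} {root a b : U} (hfix : parent root = root)
    (hreach : ∀ x, ∃ n, parent^[n] x = root)
    (hab : parent a = b) (hba : parent b = a) : a = root := by
  obtain ⟨n, hn⟩ := hreach a
  have key : ∀ k, parent^[k] a = a ∨ parent^[k] a = b := by
    intro k; induction k with
    | zero => left; rfl
    | succ k ih =>
      rw [Function.iterate_succ_apply']
      rcases ih with h | h <;> rw [h]
      · right; exact hab
      · left; exact hba
  rcases key n with h | h
  · rw [hn] at h; exact h.symm
  · rw [hn] at h
    rw [← h, hfix] at hba; exact hba.symm

lemma redPath_one {parent : U → U} {x y : U} (h : parent x = y) (hne : x ≠ y) :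
    IsRedPath parent x y 1 := by
  constructor
  · simpa using h
  · intro i hi
    interval_cases i
    simpa using hne

lemma redSupport_one {parent : U → U} (x : U) :
    redSupport parent x 1 = {x, parent x} := by
  ext z
  constructor
  · rintro ⟨i, hi, rfl⟩
    interval_cases i
    · left; rfl
    · right; simp
  · rintro (rfl | h)
    · exact ⟨0, by norm_num, rfl⟩
    · exact ⟨1, le_refl _, by simpa using h.symm⟩

lemma dirObs (white : SimpleGraph U) (parent : U → U) (root : U)
    (hfix : parent root = root) (hreach : ∀ x, ∃ n, parent^[n] x = root)
    {x y : U} (hAdj : white.Adj x y) (hxy : parent x = y) (hyroot : y ≠ root) :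
    DirObstruction white parent (parent y) := by
  set t := parent y with ht
  have hyt : y ≠ t := by
    intro h; exact hyroot (fix_eq_root hreach h.symm)
  have hxt : x ≠ t := by
    intro h
    exact hyroot (two_cycle hfix hreach (ht ▸ h ▸ rfl : parent y = x) hxy)
  refine ⟨x, y, 2, 1, hAdj.ne, hxt, hyt, by norm_num, le_refl _, ?_, redPath_one rfl hyt, ?_, Or.inl hAdj⟩
  · constructor
    · show parent^[2] x = t
      rw [show (2:ℕ) = 1+1 from rfl, Function.iterate_succ_apply', Function.iterate_one, hxy]
    · intro i hi
      interval_cases i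
      · exact hxt
      · simpa [hxy] using hyt
  · intro z hz
    rw [redSupport_one] at hz
    rcases hz.2 with rfl | h
    · right; left; rfl
    · right; right; rw [Set.mem_singleton_iff, h]

lemma altObs (white : SimpleGraph U) (parent : U → U) (hconn : white.Connected)
    {a b c d : U} (hab : a ≠ b) (hac : a ≠ c) (had : a ≠ d) (hbc : b ≠ c) (hbd : b ≠ d)
    (hcd : c ≠ d) (hAdj : white.Adj a b)
    (h1 : parent b = c ∨ parent c = b)
    (h2 : parent d = a ∨ parent a = d) :
    AltObstruction white parent := by
  classical
  obtain ⟨q⟩ := hconn.preconnected c d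
  set p2 : white.Walk c d := q.bypass with hp2
  set e : U := if parent b = c then b else c with he
  set f : U := if parent d = a then d else a with hf
  have hsuppE : redSupport parent e 1 ⊆ {a, b, c, d} := by
    rw [redSupport_one]
    rintro z (rfl | rfl)
    · by_cases h : parent b = c <;> simp [he, h]
    · by_cases h : parent b = c
      · simp [he, h]
      · have : parent c = b := h1.resolve_left h
        simp [he, h, this]
  have hsuppF : redSupport parent f 1 ⊆ {a, b, c, d} := by
    rw [redSupport_one]
    rintro z (rfl | rfl)
    · by_cases h : parent d = a <;> simp [hf, h]
    · by_cases h : parent d = a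
      · simp [hf, h]
      · have : parent a = d := h2.resolve_left h
        simp [hf, h, this]
  have hsupp1 : {x | x ∈ (Walk.cons hAdj Walk.nil : white.Walk a b).support} ⊆ ({a, b, c, d} : Set U) := by
    intro z hz
    simp only [Walk.support_cons, Walk.support_nil, Set.mem_setOf_eq, List.mem_cons] at hz
    rcases hz with rfl | hz
    · left; rfl
    · simp at hz; subst hz; right; left; rfl
  refine ⟨a, b, c, d, hab, hac, had, hbc, hbd, hcd,
    Walk.cons hAdj Walk.nil, p2, e, f, 1, 1, ?_, q.bypass_isPath, by simp, ?_, Or.inl (by simp), le_refl _, le_refl _, ?_, ?_, ?_, ?_, ?_, ?_, ?_, ?_⟩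
  · simp [Walk.isPath_def, hab]
  · have : p2.length ≠ 0 := by
      intro h
      exact hcd (Walk.eq_of_length_eq_zero h)
    omega
  · by_cases h : parent b = c
    · exact Or.inl ⟨by simp [he, h], redPath_one h hbc⟩
    · have h' : parent c = b := h1.resolve_left h
      exact Or.inr ⟨by simp [he, h], redPath_one h' hbc.symm⟩
  · by_cases h : parent d = a
    · exact Or.inl ⟨by simp [hf, h], redPath_one h had.symm⟩
    · have h' : parent a = d := h2.resolve_left h
      exact Or.inr ⟨by simp [hf, h], redPath_one h' had⟩
  · exact fun z hz => hsupp1 hz.1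
  · exact fun z hz => hsupp1 hz.1
  · exact fun z hz => hsupp1 hz.1
  · exact fun z hz => hsuppE hz.2
  · exact fun z hz => hsuppF hz.2
  · exact fun z hz => hsuppE hz.1

lemma sep_symm {white : SimpleGraph U} {parent : U → U} {root : U} {S : Set U} {v : U}
    {X Y : Set U} (h : IsSeparationOn white parent root S v X Y) :
    IsSeparationOn white parent root S v Y X := by
  obtain ⟨h1, h2, h3, h4, h5, h6, h7, h8, h9, h10, h11⟩ := h
  refine ⟨h1, h3, h2, h5, h4, h7, h6, h8.symm, fun u hu => by rcases h9 u hu with h|h|h <;> tauto,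
    fun x hx y hy => fun hadj => h10 y hy x hx hadj.symm,
    fun x hx y hy => (h11 y hy x hx).symm⟩

lemma parent_cut_mem {white : SimpleGraph U} {parent : U → U} {root : U} {v : U}
    {X Y : Set U} (hsep : IsSeparationOn white parent root Set.univ v X Y)
    (hreach : ∀ x, ∃ n, parent^[n] x = root)
    (hv : v ≠ root) (hrY : root ∈ Y) : parent v ∈ Y := by
  obtain ⟨_, _, _, _, _, hvX, hvY, hdisj, hcov, hw, hr⟩ := hsep
  have hrX : root ∉ X := fun h => (hdisj.ne_of_mem h hrY) rfl
  by_contra hpv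
  rcases hcov (parent v) trivial with h | h | h
  · exact hv (fix_eq_root hreach h)
  swap
  · exact hpv h
  -- parent v ∈ X
  have key : ∀ k, parent^[k+1] v ∈ X ∪ {v} := by
    intro k; induction k with
    | zero => left; simpa using h
    | succ k ih =>
      rw [Function.iterate_succ_apply']
      rcases ih with hz | hz
      · -- in X
        set z := parent^[k+1] v
        have hzroot : z ≠ root := fun hh => hrX (hh ▸ hz)
        have : parent z ∉ Y := by
          intro hy
          exact (hr z hz (parent z) hy).1 ⟨hzroot, rfl⟩
        rcases hcov (parent z) trivial with h' | h' | h'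
        · right; simpa using h'
        · left; exact h'
        · exact absurd h' this
      · simp only [Set.mem_singleton_iff] at hz
        rw [hz]; left; simpa using h
  obtain ⟨n, hn⟩ := hreach v
  rcases Nat.eq_zero_or_pos n with rfl | hpos
  · exact hv (by simpa using hn)
  · obtain ⟨m, rfl⟩ := Nat.exists_eq_succ_of_ne_zero (Nat.pos_iff_ne_zero.mp hpos)
    rcases key m with hz | hz
    · rw [hn] at hz; exact hrX hz
    · rw [hn] at hz
      simp only [Set.mem_singleton_iff] at hz
      exact hv hz.symm

lemma exists_white_nbr {white : SimpleGraph U} {parent : U → U} {root : U} {v : U}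
    {X Y : Set U} (hsep : IsSeparationOn white parent root Set.univ v X Y)
    (hconn : white.Connected) : ∃ u ∈ Y, white.Adj v u := by
  classical
  obtain ⟨_, _, _, _, ⟨y, hy⟩, hvX, hvY, hdisj, hcov, hw, hr⟩ := hsep
  have walk_through : ∀ {x yy : U} (q : white.Walk x yy), yy ∈ Y → x ∈ X → v ∈ q.support := by
    intro x yy q
    induction q with
    | nil => intro hyy hx; exact absurd hyy (fun h => (hdisj.ne_of_mem hx h) rfl)
    | @cons x' z' y' h' q' ih =>
      intro hyy hx
      rcases hcov z' trivial with rfl | hz | hz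
      · simp [Walk.support_cons]
      · rw [Walk.support_cons]
        exact List.mem_cons_of_mem _ (ih hyy hz)
      · exact absurd h' (hw x' hx z' hz)
  obtain ⟨q0⟩ := hconn.preconnected v y
  set p := q0.bypass with hp
  have hpath : p.IsPath := q0.bypass_isPath
  cases hpe : p with
  | nil => exact absurd hy hvY
  | @cons _ z _ h' q' =>
    rcases hcov z trivial with rfl | hz | hz
    · exact absurd rfl h'.ne
    · exfalso
      have hvmem : v ∈ q'.support := walk_through q' hy hz
      rw [hpe] at hpath
      have := hpath.support_nodup
      rw [Walk.support_cons] at this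
      exact (List.nodup_cons.mp this).1 hvmem
    · exact ⟨z, hz, h'⟩

lemma lift_sep {white : SimpleGraph U} {parent : U → U} {root v : U} {X Y : Set U}
    (hsep : IsSeparationOn white parent root Set.univ v X Y)
    (hreach : ∀ x, ∃ n, parent^[n] x = root)
    (hv : v ≠ root) (hrY : root ∈ Y)
    {v' : U} {X' Y' : Set U}
    (hsub : IsSeparationOn white parent v (X ∪ {v}) v' X' Y') (hvY' : v ∈ Y') :
    IsSeparationOn white parent root Set.univ v' X' (Y' ∪ Y) ∧ v' ∈ X := by
  have hpv : parent v ∈ Y := parent_cut_mem hsep hreach hv hrY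
  obtain ⟨_, _, _, _, _, hvX, hvY, hdisj, hcov, hw, hr⟩ := hsep
  obtain ⟨hv'S, hX'S, hY'S, hX'ne, hY'ne, hv'X', hv'Y', hdisj', hcov', hw', hr'⟩ := hsub
  have hv'v : v' ≠ v := fun h => hv'Y' (h ▸ hvY')
  have hv'X : v' ∈ X := by
    rcases hv'S with h | h
    · exact h
    · exact absurd h hv'v
  have hX'X : X' ⊆ X := by
    intro x hx
    rcases hX'S hx with h | h
    · exact h
    · exfalso; simp only [Set.mem_singleton_iff] at h
      exact hdisj'.ne_of_mem hx hvY' h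
  refine ⟨⟨trivial, fun _ _ => trivial, fun _ _ => trivial, hX'ne,
    ⟨v, Or.inl hvY'⟩, hv'X', ?_, ?_, ?_, ?_, ?_⟩, hv'X⟩
  · rintro (h | h)
    · exact hv'Y' h
    · exact (hdisj.ne_of_mem hv'X h) rfl
  · rw [Set.disjoint_union_right]
    exact ⟨hdisj', Set.disjoint_of_subset_left hX'X hdisj⟩
  · intro u _
    rcases hcov u trivial with rfl | h | h
    · right; right; left; exact hvY'
    · rcases hcov' u (Or.inl h) with h' | h' | h'
      · left; exact h'
      · right; left; exact h'
      · right; right; left; exact h'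
    · right; right; right; exact h
  · rintro x hx y (hy | hy)
    · exact hw' x hx y hy
    · exact hw x (hX'X hx) y hy
  · rintro x hx y (hy | hy)
    · constructor
      · rintro ⟨hxr, hpx⟩
        have hxv : x ≠ v := fun h => hvX (h ▸ hX'X hx)
        exact (hr' x hx y hy).1 ⟨hxv, hpx⟩
      · rintro ⟨hyr, hpy⟩
        by_cases hyv : y = v
        · subst hyv
          rw [hpy] at hpv
          exact hdisj.ne_of_mem (hX'X hx) hpv rfl
        · exact (hr' x hx y hy).2 ⟨hyv, hpy⟩
    · exact hr x (hX'X hx) y hy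

lemma leaf_lemma [Fintype U] {white : SimpleGraph U} {parent : U → U} {root : U}
    (hconn : white.Connected) (hfix : parent root = root)
    (hreach : ∀ x, ∃ n, parent^[n] x = root) (hcard : 2 ≤ Fintype.card U)
    (hdir : ∀ t, ¬ DirObstruction white parent t) (halt : ¬ AltObstruction white parent)
    {v : U} {X Y : Set U}
    (hsep : IsSeparationOn white parent root Set.univ v X Y)
    (hv : v ≠ root) (hrY : root ∈ Y) :
    redLeafOn parent root (Y ∪ {v}) v ∨ whiteLeafOn white (Y ∪ {v}) v := by
  classical
  by_contra hcon
  push_neg at hcon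
  obtain ⟨hnr, hnw⟩ := hcon
  have hvY : v ∉ Y := hsep.2.2.2.2.2.2.1
  -- get red child D ∈ Y
  simp only [redLeafOn, not_forall] at hnr
  obtain ⟨D, hDS, hDred⟩ := hnr
  rw [not_not] at hDred
  obtain ⟨hDroot, hDpar⟩ := hDred
  have hDv : D ≠ v := by
    intro h; subst h
    exact hv (fix_eq_root hreach hDpar)
  have hpvv : parent v ≠ v := fun h => hv (fix_eq_root hreach h)
  have hpvD : parent v ≠ D := fun h => hv (two_cycle hfix hreach h hDpar)
  -- get two white neighbors in Y
  obtain ⟨u1, hu1Y, hu1adj⟩ := exists_white_nbr hsep hconn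
  have hP1 : u1 ∈ Y ∪ {v} ∧ white.Adj v u1 := ⟨Or.inl hu1Y, hu1adj⟩
  have h2nbr : ∃ u2, (u2 ∈ Y ∪ {v} ∧ white.Adj v u2) ∧ u2 ≠ u1 := by
    by_contra h
    push_neg at h
    exact hnw ⟨u1, hP1, fun y hy => h y hy⟩
  obtain ⟨u2, ⟨hu2S, hu2adj⟩, hne⟩ := h2nbr
  have hu2Y : u2 ∈ Y := by
    rcases hu2S with h | h
    · exact h
    · simp only [Set.mem_singleton_iff] at h
      exact absurd (h ▸ hu2adj) (white.irrefl)
  have hch : ∃ w w', w ∈ Y ∧ white.Adj v w ∧ w ≠ D ∧ w' ∈ Y ∧ white.Adj v w' ∧ w' ≠ w := by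
    by_cases h : u1 = D
    · exact ⟨u2, u1, hu2Y, hu2adj, h ▸ hne, hu1Y, hu1adj, fun hh => hne hh.symm⟩
    · exact ⟨u1, u2, hu1Y, hu1adj, h, hu2Y, hu2adj, hne⟩
  obtain ⟨w, w', hwY, hwadj, hwD, hw'Y, hw'adj, hww'⟩ := hch
  by_cases h1 : parent w = v
  · exact hdir _ (dirObs white parent root hfix hreach hwadj.symm h1 hv)
  by_cases h2 : parent w = w
  · -- w = root
    have hwroot : w = root := fix_eq_root hreach h2
    subst hwroot
    by_cases hz : ∃ z, parent z = w ∧ z ≠ w ∧ z ≠ v ∧ z ≠ D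
    · obtain ⟨z, hz1, hz2, hz3, hz4⟩ := hz
      exact halt (altObs white parent hconn hv hz3.symm hDv.symm hz2.symm
        (fun h => hDroot h.symm) hz4 hwadj (Or.inr hz1) (Or.inl hDpar))
    · push_neg at hz
      -- every red child of root is v or D; find one and exclude D
      obtain ⟨x, hx⟩ := Fintype.exists_ne_of_one_lt_card (by omega) w
      have hnfind := Nat.find_spec (hreach x)
      have hn0 : Nat.find (hreach x) ≠ 0 := by
        intro h
        rw [h] at hnfind
        exact hx hnfind
      obtain ⟨m, hm⟩ := Nat.exists_eq_succ_of_ne_zero hn0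
      set z0 := parent^[m] x with hz0
      have hpz0 : parent z0 = w := by
        rw [hz0, ← Function.iterate_succ_apply' parent m x, ← hm]
        exact hnfind
      have hz0w : z0 ≠ w := Nat.find_min (hreach x) (hm ▸ m.lt_succ_self)
      have hz0v : z0 = v := by
        by_contra h
        have := hz z0 hpz0 hz0w h
        rw [this] at hpz0
        rw [hDpar] at hpz0
        exact hv hpz0
      have hpv : parent v = w := hz0v ▸ hpz0
      -- now use w'
      by_cases k1 : parent w' = v
      · exact hdir _ (dirObs white parent w hfix hreach hw'adj.symm k1 hv)
      by_cases k2 : parent w' = w'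
      · exact hww' (fix_eq_root hreach k2)
      by_cases k3 : parent w' = w
      · have := hz w' k3 hww' hw'adj.ne'
        rw [this] at k3
        rw [hDpar] at k3
        exact hv k3
      · exact halt (altObs white parent hconn hw'adj.ne (fun h => k1 h.symm) hv
          (fun h => k2 h.symm) hww' k3 hw'adj (Or.inl rfl) (Or.inr hpv))
  by_cases h3 : parent w = D
  · -- red path w → D → v
    have hwroot : w ≠ root := by
      intro hh
      rw [hh, hfix] at h3
      exact hwD (hh.trans h3)
    by_cases h4 : parent v = w
    · exact hdir _ (dirObs white parent root hfix hreach hwadj h4 hwroot)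
    · exact halt (altObs white parent hconn hwadj.ne hDv.symm (fun h => hpvv h.symm)
        hwD (fun h => h4 h.symm) (fun h => hpvD h.symm) hwadj (Or.inl h3) (Or.inr rfl))
  · exact halt (altObs white parent hconn hwadj.ne (fun h => h1 h.symm) hDv.symm
      (fun h => h2 h.symm) hwD h3 hwadj (Or.inl rfl) (Or.inl hDpar))

/-- A bi-tree on at least two vertices with no directed obstruction and no alternating
obstruction is either a bi-spider, or admits a separation `(v, X, Y)` such that the bi-tree
induced on `X ∪ {v}` (that is, `T ∖ Y`) is a bi-spider rooted at `v`, and `v` is a leaf of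
the red in-arborescence or of the white tree induced on `Y ∪ {v}` (that is, `T ∖ X`). -/
theorem biSpider_or_separation [Fintype U]
    (white : SimpleGraph U) (parent : U → U) (root : U)
    (hwhite : white.IsTree) (hrootFix : parent root = root)
    (hreach : ∀ x, ∃ n, parent^[n] x = root)
    (hcard : 2 ≤ Fintype.card U)
    (hdir : ∀ v, ¬ DirObstruction white parent v)
    (halt : ¬ AltObstruction white parent) :
    IsBiSpiderOn white parent Set.univ root ∨
      ∃ v X Y, IsSeparationOn white parent root Set.univ v X Y ∧
        IsBiSpiderOn white parent (X ∪ {v}) v ∧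
        (redLeafOn parent root (Y ∪ {v}) v ∨ whiteLeafOn white (Y ∪ {v}) v) := by
  classical
  by_cases hsp : ∀ v X Y, IsSeparationOn white parent root Set.univ v X Y → v = root
  · exact Or.inl (Or.inr hsp)
  · push_neg at hsp
    obtain ⟨v0, X0, Y0, hsep0, hv0⟩ := hsp
    have hex : ∃ n, ∃ v X Y, IsSeparationOn white parent root Set.univ v X Y ∧
        v ≠ root ∧ root ∈ Y ∧ X.ncard = n := by
      have hr0 : root ∈ X0 ∨ root ∈ Y0 := by
        rcases hsep0.2.2.2.2.2.2.2.2.1 root trivial with h | h | h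
        · exact absurd h.symm hv0
        · exact Or.inl h
        · exact Or.inr h
      rcases hr0 with h | h
      · exact ⟨Y0.ncard, v0, Y0, X0, sep_symm hsep0, hv0, h, rfl⟩
      · exact ⟨X0.ncard, v0, X0, Y0, hsep0, hv0, h, rfl⟩
    obtain ⟨v, X, Y, hsep, hvroot, hrY, hncard⟩ := Nat.find_spec hex
    right
    refine ⟨v, X, Y, hsep, Or.inr ?_,
      leaf_lemma hwhite.isConnected hrootFix hreach hcard hdir halt hsep hvroot hrY⟩
    intro v' X' Y' hsub
    by_contra hv'v
    have key : ∀ (A B : Set U), IsSeparationOn white parent v (X ∪ {v}) v' A B →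
        v ∈ B → False := by
      intro A B hsub' hvB
      obtain ⟨hlift, hv'X⟩ := lift_sep hsep hreach hvroot hrY hsub' hvB
      have hAX : A ⊆ X := by
        intro x hx
        rcases hsub'.2.1 hx with h | h
        · exact h
        · exfalso
          simp only [Set.mem_singleton_iff] at h
          exact hsub'.2.2.2.2.2.2.2.1.ne_of_mem hx hvB h
      have hv'A : v' ∉ A := hsub'.2.2.2.2.2.1
      have hssub : A ⊂ X := ⟨hAX, fun hXA => hv'A (hXA hv'X)⟩
      have hlt : A.ncard < X.ncard := Set.ncard_lt_ncard hssub (Set.toFinite X)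
      have hv'root : v' ≠ root := fun h =>
        (hsep.2.2.2.2.2.2.2.1.ne_of_mem hv'X hrY) h
      exact Nat.find_min hex (hncard ▸ hlt)
        ⟨v', A, B ∪ Y, hlift, hv'root, Or.inr hrY, rfl⟩
    have hvmem : v ∈ X' ∨ v ∈ Y' := by
      rcases hsub.2.2.2.2.2.2.2.2.1 v (Or.inr rfl) with h | h | h
      · exact absurd h.symm hv'v
      · exact Or.inl h
      · exact Or.inr h
    rcases hvmem with h | h
    · exact key Y' X' (sep_symm hsub) h
    · exact key X' Y' hsub h
end

section
/- Let G be even-hole-free with cliques X_1,…,X_m as parts, a center part X_p containing a vertex y_p, and for every other part X_i a vertex w_{p,i} complete to X_p ∪ X_i with no other neighbors. Then the subgraph G' induced by the union of the parts X_i (i ≠ p), after removing all neighbors of y_p, is chordal. -/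
open SimpleGraph

variable {V : Type*}

/-!
Give each vertex of a hole `H` of `G'` the part containing it. Two vertices at distance two on `H`
are non-adjacent, so they lie in different parts (the parts are cliques). If `H` is odd, "lies in
the same part as its successor" cannot alternate around `H`, so some three consecutive vertices
`x_a, x_b, x_c` of `H` lie in three distinct parts. Since none of them sees `y_p`, the vertices
`y_p, w_a, x_a, x_b, x_c, w_c` form a hole of length six in `G`. Even holes of `G'` are holes
of `G`.
-/

open Function

section

open Fin.CommRing

theorem cycleGraph_adj_add_one {n : ℕ} (i : Fin (n + 2)) : (cycleGraph (n + 2)).Adj i (i + 1) :=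
  cycleGraph_adj.2 (.inr (add_sub_cancel_left i 1))

theorem cycleGraph_not_adj_add_two {n : ℕ} (hn : 2 ≤ n) (i : Fin (n + 2)) :
    ¬ (cycleGraph (n + 2)).Adj i (i + 2) := by
  have h3 : (3 : Fin (n + 2)) ≠ 0 := by
    simp [Fin.ext_iff, Nat.mod_eq_of_lt (show 3 < n + 2 by omega)]
  rw [cycleGraph_adj]
  rintro (h | h)
  · exact h3 (by linear_combination -h)
  · exact one_ne_zero (by linear_combination h : (1 : Fin (n + 2)) = 0)

theorem hasInducedCycle_of_forall_adj_iff {G : SimpleGraph V} {n : ℕ} (hn : 5 ≤ n)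
    (v : Fin n → V) (hv : ∀ i j, G.Adj (v i) (v j) ↔ (cycleGraph n).Adj i j) :
    HasInducedCycle G n := by
  obtain ⟨n, rfl⟩ : ∃ k, n = k + 2 := ⟨n - 2, by omega⟩
  refine ⟨⟨v, fun i j hij => ?_⟩, hv⟩
  by_contra hne
  have h4 : (4 : Fin (n + 2)) ≠ 0 := by
    simp [Fin.ext_iff, Nat.mod_eq_of_lt (show 4 < n + 2 by omega)]
  -- `j` shares the neighbours `i + 1` and `i - 1` of `i`, which forces `j = i + 2 = i - 2`.
  have hsucc := (hv j (i + 1)).1 (hij ▸ (hv i (i + 1)).2 (cycleGraph_adj_add_one i))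
  have hpred_i : (cycleGraph (n + 2)).Adj i (i - 1) :=
    cycleGraph_adj.2 (.inl (sub_sub_cancel i 1))
  have hpred := (hv j (i - 1)).1 (hij ▸ (hv i (i - 1)).2 hpred_i)
  rw [cycleGraph_adj] at hsucc hpred
  rcases hsucc with hs | hs
  · rcases hpred with hp | hp
    · exact hne (by linear_combination -hp)
    · exact h4 (by linear_combination -hs - hp)
  · exact hne (by linear_combination hs)

theorem hasInducedCycle_six {G : SimpleGraph V} {v₀ v₁ v₂ v₃ v₄ v₅ : V}
    (h₀₁ : G.Adj v₀ v₁) (h₁₂ : G.Adj v₁ v₂) (h₂₃ : G.Adj v₂ v₃) (h₃₄ : G.Adj v₃ v₄)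
    (h₄₅ : G.Adj v₄ v₅) (h₅₀ : G.Adj v₅ v₀)
    (h₀₂ : ¬ G.Adj v₀ v₂) (h₀₃ : ¬ G.Adj v₀ v₃) (h₀₄ : ¬ G.Adj v₀ v₄)
    (h₁₃ : ¬ G.Adj v₁ v₃) (h₁₄ : ¬ G.Adj v₁ v₄) (h₁₅ : ¬ G.Adj v₁ v₅)
    (h₂₄ : ¬ G.Adj v₂ v₄) (h₂₅ : ¬ G.Adj v₂ v₅) (h₃₅ : ¬ G.Adj v₃ v₅) :
    HasInducedCycle G 6 := by
  refine hasInducedCycle_of_forall_adj_iff (by norm_num) ![v₀, v₁, v₂, v₃, v₄, v₅] fun i j => ?_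
  fin_cases i <;> fin_cases j <;>
    simp +decide [h₀₁, h₁₂, h₂₃, h₃₄, h₄₅, h₅₀, h₀₁.symm, h₁₂.symm,
      h₂₃.symm, h₃₄.symm, h₄₅.symm, h₅₀.symm, h₀₂, h₀₃, h₀₄, h₁₃, h₁₄, h₁₅, h₂₄, h₂₅, h₃₅,
      mt G.adj_symm h₀₂, mt G.adj_symm h₀₃, mt G.adj_symm h₀₄, mt G.adj_symm h₁₃,
      mt G.adj_symm h₁₄, mt G.adj_symm h₁₅, mt G.adj_symm h₂₄, mt G.adj_symm h₂₅,
      mt G.adj_symm h₃₅]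

theorem Fin.exists_add_one_iff_of_odd {n : ℕ} [NeZero n] (hn : Odd n) (P : Fin n → Prop) :
    ∃ i, (P (i + 1) ↔ P i) := by
  by_contra h
  have alt (i : Fin n) : P (i + 1) ↔ ¬ P i := by
    have := fun hi => h ⟨i, hi⟩
    tauto
  have hP (t : ℕ) : P t ↔ (P 0 ↔ Even t) := by
    induction t with
    | zero => simp
    | succ t ih => rw [Nat.cast_succ, Nat.even_add_one, alt, ih]; tauto
  simpa [Nat.not_even_iff_odd.2 hn] using hP n

theorem exists_path_in_three_cliques_of_odd {ι : Type*} {G : SimpleGraph V} {n : ℕ}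
    (hn : 2 ≤ n) (hodd : Odd (n + 2)) {f : Fin (n + 2) ↪ V}
    (hf : ∀ i j, G.Adj (f i) (f j) ↔ (cycleGraph (n + 2)).Adj i j)
    {X : ι → Set V} (hX : ∀ i, G.IsClique (X i)) {g : Fin (n + 2) → ι}
    (hg : ∀ i, f i ∈ X (g i)) :
    ∃ i j k, g i ≠ g j ∧ g j ≠ g k ∧ g i ≠ g k ∧
      G.Adj (f i) (f j) ∧ G.Adj (f j) (f k) ∧ ¬ G.Adj (f i) (f k) := by
  have h2 : (2 : Fin (n + 2)) ≠ 0 := by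
    simp [Fin.ext_iff, Nat.mod_eq_of_lt (show 2 < n + 2 by omega)]
  have hskip (i : Fin (n + 2)) : g i ≠ g (i + 2) := fun h =>
    cycleGraph_not_adj_add_two hn i <| (hf _ _).1 <|
      hX _ (hg i) (h ▸ hg (i + 2)) (f.injective.ne (add_ne_left.2 h2).symm)
  obtain ⟨i, hi⟩ := Fin.exists_add_one_iff_of_odd hodd fun i => g i = g (i + 1)
  have hi2 : i + 1 + 1 = i + 2 := by ring
  rw [hi2] at hi
  have h01 : g i ≠ g (i + 1) := fun h => hskip i (h.trans (hi.2 h))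
  refine ⟨i, i + 1, i + 2, h01, fun h => h01 (hi.1 h), hskip i,
    (hf _ _).2 (cycleGraph_adj_add_one i), ?_,
    fun h => cycleGraph_not_adj_add_two hn i ((hf _ _).1 h)⟩
  exact hi2 ▸ (hf _ _).2 (cycleGraph_adj_add_one (i + 1))

theorem mem_iff_eq_of_pairwise_disjoint {ι : Type*} {X : ι → Set V} (hX : Pairwise (Disjoint on X))
    {i j : ι} {x : V} (hx : x ∈ X j) : x ∈ X i ↔ i = j :=
  ⟨fun hi => hX.eq (Set.not_disjoint_iff.2 ⟨x, hi, hx⟩), fun h => h ▸ hx⟩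

theorem hasInducedCycle_six_through_three_parts {ι : Type*} {G : SimpleGraph V} {X : ι → Set V}
    (hX : Pairwise (Disjoint on X)) {p : ι} {y : V} (hy : y ∈ X p) {w : ι → V}
    (hw : ∀ i, i ≠ p → ∀ j, w i ∉ X j)
    (hwadj : ∀ i, i ≠ p → ∀ u, u ≠ w i → (G.Adj (w i) u ↔ u ∈ X p ∨ u ∈ X i))
    {a b c : ι} (ha : a ≠ p) (hb : b ≠ p) (hc : c ≠ p) (hab : a ≠ b) (hbc : b ≠ c) (hac : a ≠ c)
    {xa xb xc : V} (hxa : xa ∈ X a) (hxb : xb ∈ X b) (hxc : xc ∈ X c)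
    (hxab : G.Adj xa xb) (hxbc : G.Adj xb xc) (hxac : ¬ G.Adj xa xc)
    (hya : ¬ G.Adj y xa) (hyb : ¬ G.Adj y xb) (hyc : ¬ G.Adj y xc) :
    HasInducedCycle G 6 := by
  have hwx {i : ι} (hi : i ≠ p) {j : ι} {x : V} (hx : x ∈ X j) :
      G.Adj (w i) x ↔ j = p ∨ j = i := by
    rw [hwadj i hi x fun h => hw i hi j (h ▸ hx), mem_iff_eq_of_pairwise_disjoint hX hx,
      mem_iff_eq_of_pairwise_disjoint hX hx, eq_comm, @eq_comm _ i]
  have hww : ¬ G.Adj (w a) (w c) := fun h => by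
    rcases (hwadj a ha (w c) (G.ne_of_adj h).symm).1 h with h' | h' <;> exact hw c hc _ h'
  refine hasInducedCycle_six ((hwx ha hy).2 (.inl rfl)).symm ((hwx ha hxa).2 (.inr rfl)) hxab hxbc
    ((hwx hc hxc).2 (.inr rfl)).symm ((hwx hc hy).2 (.inl rfl)) hya hyb hyc ?_ ?_ hww hxac ?_ ?_
  · simp [hwx ha hxb, hb, hab.symm]
  · simp [hwx ha hxc, hc, hac.symm]
  · simp [G.adj_comm xa, hwx hc hxa, ha, hac]
  · simp [G.adj_comm xb, hwx hc hxb, hb, hbc]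

end

/-- Let `G` be even-hole-free with cliques `X i` as parts, a center part `X p` containing
a vertex `yp`, and for every other part `X i` a vertex `w i` complete to `X p ∪ X i` with
no other neighbors. Then the subgraph induced by the union of the parts `X i` (`i ≠ p`),
after removing all neighbors of `yp`, is chordal (has no induced cycle of length ≥ 4). -/
theorem induced_nonneighbors_chordal (G : SimpleGraph V) (m : ℕ)
    (X : Fin m → Set V)
    (hclique : ∀ i, G.IsClique (X i))
    (hdisj : ∀ i j, i ≠ j → Disjoint (X i) (X j))
    (p : Fin m) (yp : V) (hyp : yp ∈ X p)
    (w : Fin m → V)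
    (hwnot : ∀ i, i ≠ p → ∀ j, w i ∉ X j)
    (hwadj : ∀ i, i ≠ p → ∀ u, u ≠ w i → (G.Adj (w i) u ↔ u ∈ X p ∨ u ∈ X i))
    (hEHF : EvenHoleFree G) :
    ∀ n, 4 ≤ n → ¬ ∃ f : Fin n ↪ V,
      (∀ i, (∃ j, j ≠ p ∧ f i ∈ X j) ∧ ¬ G.Adj yp (f i)) ∧
      (∀ i j, G.Adj (f i) (f j) ↔ (SimpleGraph.cycleGraph n).Adj i j) := by
  rintro n hn ⟨f, hparts, hf⟩
  rcases Nat.even_or_odd n with heven | hodd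
  · exact hEHF n hn heven ⟨f, hf⟩
  obtain ⟨n, rfl⟩ : ∃ k, n = k + 2 := ⟨n - 2, by omega⟩
  choose g hgp hg using fun i => (hparts i).1
  obtain ⟨i, j, k, hij, hjk, hik, hfij, hfjk, hfik⟩ :=
    exists_path_in_three_cliques_of_odd (by omega) hodd hf hclique hg
  exact hEHF 6 (by norm_num) (by decide) <|
    hasInducedCycle_six_through_three_parts (fun i j => hdisj i j) hyp hwnot hwadj (hgp i) (hgp j)
      (hgp k) hij hjk hik (hg i) (hg j) (hg k) hfij hfjk hfik (hparts i).2 (hparts j).2 (hparts k).2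
end

section
/- If G is a C4-free graph with independence number α(G) < k for some k ≥ 2, then the vertex set of G can be covered by at most 2^{k−1} − 1 cliques. -/
open SimpleGraph

variable {V : Type*}

/-!
Induction on the bound `k` for independent sets of a vertex set `S`. If `S` is not a clique,
pick non-adjacent `x, y ∈ S`. Every vertex of `S` is a non-neighbour of `x`, a non-neighbour
of `y`, or a common neighbour of both. Adding `x` to an independent set of non-neighbours of `x`
keeps it independent, so those have independent sets of size at most `k - 1`, and likewise for
`y`; the common neighbours form a single clique, since two non-adjacent ones would span an
induced `C4` with `x` and `y`. Hence `2 (2 ^ (k - 1) - 1) + 1 = 2 ^ k - 1` cliques suffice.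
-/

section CliqueCover

variable {G : SimpleGraph V}

lemma hasInducedCycle_four {a b c d : V} (hab : G.Adj a b) (hbc : G.Adj b c) (hcd : G.Adj c d)
    (hda : G.Adj d a) (hac : a ≠ c) (hbd : b ≠ d) (hnac : ¬G.Adj a c) (hnbd : ¬G.Adj b d) :
    HasInducedCycle G 4 := by
  have := hab.ne; have := hbc.ne; have := hcd.ne; have := hda.ne
  have hinj : Function.Injective ![a, b, c, d] := by
    intro i j hij
    fin_cases i <;> fin_cases j <;> simp_all [eq_comm]
  have hnca : ¬G.Adj c a := fun h => hnac h.symm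
  have hndb : ¬G.Adj d b := fun h => hnbd h.symm
  refine ⟨⟨_, hinj⟩, fun i j => ?_⟩
  fin_cases i <;> fin_cases j <;>
    simp +decide [hab, hbc, hcd, hda, hab.symm, hbc.symm, hcd.symm, hda.symm, hnac, hnbd, hnca,
      hndb]

lemma C4Free.isClique_commonNeighbors (hG : C4Free G) {x y : V} (hxy : x ≠ y)
    (hnxy : ¬G.Adj x y) : G.IsClique (G.commonNeighbors x y) := by
  intro u hu v hv huv
  by_contra hnuv
  rw [mem_commonNeighbors] at hu hv
  exact hG (hasInducedCycle_four hu.1 hu.2.symm hv.2 hv.1.symm hxy huv hnxy hnuv)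

lemma card_le_of_isIndepSet_diff_insert_neighborSet {S : Set V} {k : ℕ} {x : V} (hx : x ∈ S)
    (hS : ∀ s : Finset V, ↑s ⊆ S → G.IsIndepSet ↑s → s.card ≤ k + 1) :
    ∀ s : Finset V, ↑s ⊆ S \ insert x (G.neighborSet x) → G.IsIndepSet ↑s → s.card ≤ k := by
  classical
  intro s hsub hs
  have hxs : x ∉ s := fun h => (hsub h).2 (Set.mem_insert x _)
  have hins : G.IsIndepSet ↑(insert x s) := by
    have hnadj : ∀ b ∈ s, ¬G.Adj x b := fun b hb hxb => (hsub hb).2 (Set.mem_insert_of_mem x hxb)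
    rw [Finset.coe_insert, isIndepSet_iff, Set.pairwise_insert]
    exact ⟨hs, fun b hb _ => ⟨hnadj b hb, fun hbx => hnadj b hb hbx.symm⟩⟩
  have hins_sub : ↑(insert x s) ⊆ S := by
    rw [Finset.coe_insert]
    exact Set.insert_subset hx fun v hv => (hsub hv).1
  have := hS (insert x s) hins_sub hins
  rwa [Finset.card_insert_of_notMem hxs, Nat.add_le_add_iff_right] at this

lemma subset_diff_union_diff_union_commonNeighbors (S : Set V) {x y : V} (hxy : x ≠ y)
    (hnxy : ¬G.Adj x y) :
    S ⊆ (S \ insert x (G.neighborSet x)) ∪ (S \ insert y (G.neighborSet y)) ∪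
      G.commonNeighbors x y := by
  intro v hv
  simp only [Set.mem_union, Set.mem_sdiff, Set.mem_insert_iff, mem_neighborSet,
    mem_commonNeighbors]
  by_cases hx : v = x <;> by_cases hy : v = y <;> subst_vars <;> tauto

def CliqueCoverable (G : SimpleGraph V) (S : Set V) (n : ℕ) : Prop :=
  ∃ 𝒞 : Finset (Set V), 𝒞.card ≤ n ∧ (∀ c ∈ 𝒞, G.IsClique c) ∧ S ⊆ ⋃₀ ↑𝒞

lemma cliqueCoverable_empty : CliqueCoverable G ∅ 0 :=
  ⟨∅, le_rfl, by simp, Set.empty_subset _⟩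

lemma SimpleGraph.IsClique.cliqueCoverable {S : Set V} (hS : G.IsClique S) :
    CliqueCoverable G S 1 :=
  ⟨{S}, le_rfl, by simpa using hS, by simp⟩

lemma CliqueCoverable.mono {S T : Set V} {m n : ℕ} (h : CliqueCoverable G S m) (hTS : T ⊆ S)
    (hmn : m ≤ n) : CliqueCoverable G T n :=
  let ⟨𝒞, hcard, hcliques, hcover⟩ := h
  ⟨𝒞, hcard.trans hmn, hcliques, hTS.trans hcover⟩

lemma CliqueCoverable.union {S T : Set V} {m n : ℕ} (hS : CliqueCoverable G S m)
    (hT : CliqueCoverable G T n) : CliqueCoverable G (S ∪ T) (m + n) := by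
  classical
  obtain ⟨𝒞, hcard, hcliques, hcover⟩ := hS
  obtain ⟨𝒟, hcard', hcliques', hcover'⟩ := hT
  refine ⟨𝒞 ∪ 𝒟, (Finset.card_union_le _ _).trans (add_le_add hcard hcard'), ?_, ?_⟩
  · exact fun c hc => (Finset.mem_union.mp hc).elim (hcliques c) (hcliques' c)
  · rw [Finset.coe_union, Set.sUnion_union]
    exact Set.union_subset_union hcover hcover'

theorem C4Free.cliqueCoverable_of_forall_isIndepSet_card_le (hG : C4Free G) (k : ℕ) (S : Set V)
    (hS : ∀ s : Finset V, ↑s ⊆ S → G.IsIndepSet ↑s → s.card ≤ k) :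
    CliqueCoverable G S (2 ^ k - 1) := by
  induction k generalizing S with
  | zero =>
    have hempty : S = ∅ := Set.eq_empty_of_forall_notMem fun v hv => by
      simpa using hS {v} (by simpa using hv) (by simp)
    simpa [hempty] using cliqueCoverable_empty
  | succ k ih =>
    by_cases hclique : G.IsClique S
    · exact hclique.cliqueCoverable.mono subset_rfl (by have := Nat.one_le_two_pow (n := k); omega)
    obtain ⟨x, hx, y, hy, hxy, hnxy⟩ : ∃ x ∈ S, ∃ y ∈ S, x ≠ y ∧ ¬G.Adj x y := by
      simpa [isClique_iff, Set.Pairwise] using hclique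
    have hX := ih _ (card_le_of_isIndepSet_diff_insert_neighborSet hx hS)
    have hY := ih _ (card_le_of_isIndepSet_diff_insert_neighborSet hy hS)
    have hC := (hG.isClique_commonNeighbors hxy hnxy).cliqueCoverable
    refine ((hX.union hY).union hC).mono
      (subset_diff_union_diff_union_commonNeighbors S hxy hnxy) ?_
    have := Nat.one_le_two_pow (n := k)
    rw [pow_succ]
    omega

end CliqueCover

theorem c4free_cliqueCover_of_small_alpha_general (G : SimpleGraph V) (hG : C4Free G)
    (k : ℕ)
    (halpha : ∀ s : Finset V, _root_.IsIndepSet G ↑s → s.card < k) :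
    ∃ 𝒞 : Finset (Set V), 𝒞.card ≤ 2 ^ (k - 1) - 1 ∧
      (∀ c ∈ 𝒞, G.IsClique c) ∧ ∀ v : V, ∃ c ∈ 𝒞, v ∈ c := by
  -- `_root_.IsIndepSet G` and `G.IsIndepSet` are definitionally equal.
  obtain ⟨𝒞, hcard, hcliques, hcover⟩ := hG.cliqueCoverable_of_forall_isIndepSet_card_le (k - 1)
    Set.univ fun s _ hs => Nat.le_sub_one_of_lt (halpha s hs)
  exact ⟨𝒞, hcard, hcliques, fun v => Set.mem_sUnion.mp (hcover (Set.mem_univ v))⟩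

/-- If `G` is a `C4`-free graph with independence number less than `k` for some `k ≥ 2`,
then the vertex set of `G` can be covered by at most `2 ^ (k - 1) - 1` cliques. -/
theorem c4free_cliqueCover_of_small_alpha [Fintype V] (G : SimpleGraph V) (hG : C4Free G)
    (k : ℕ) (hk : 2 ≤ k)
    (halpha : ∀ s : Finset V, _root_.IsIndepSet G ↑s → s.card < k) :
    ∃ 𝒞 : Finset (Set V), 𝒞.card ≤ 2 ^ (k - 1) - 1 ∧
      (∀ c ∈ 𝒞, G.IsClique c) ∧ ∀ v : V, ∃ c ∈ 𝒞, v ∈ c :=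
  c4free_cliqueCover_of_small_alpha_general G hG k halpha
end
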